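/- arXiv:1812.10507 — 3 statements merged into one kernel-verified Lean document; each statement's English description precedes it below -/
import Mathlib

section
/- The constant c = (1/π) ∫_{-π}^{π} (-cos φ + 2 - sqrt((cos φ - 2)^2 - 1)) · sin^2 φ dφ equals 2(1 - 8/(3π)). -/
/-!
The integrand is even, so it suffices to integrate over `[0, π]`. There `sin φ ≥ 0`, and with
`c = cos φ, s = sin φ` one has `√((c - 2)² - 1) s² = s (1 - c) √(4 - (c - 1)²)`, which is the
derivative of `(4 - (cos φ - 1)²)^(3/2) / 3`. The remaining part `(2 - c) s²` is elementary, so the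
integrand has an explicit primitive whose increment over `[0, π]` is `π - 8/3`.
-/

open Real intervalIntegral MeasureTheory Set

theorem intervalIntegral.integral_neg_eq_two_nsmul_of_even {E : Type*} [NormedAddCommGroup E]
    [NormedSpace ℝ E] {f : ℝ → E} {a : ℝ} (heven : ∀ x, f (-x) = f x)
    (hf : IntervalIntegrable f volume (-a) a) :
    ∫ x in -a..a, f x = 2 • ∫ x in 0..a, f x := by
  have h0 : (0 : ℝ) ∈ uIcc (-a) a := by
    rcases le_total 0 a with h | h
    · exact mem_uIcc.2 (Or.inl ⟨by linarith, h⟩)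
    · exact mem_uIcc.2 (Or.inr ⟨h, by linarith⟩)
  have hleft : ∫ x in -a..0, f x = ∫ x in 0..a, f x := by
    simpa only [heven, neg_zero, neg_neg] using integral_comp_neg (a := -a) (b := 0) f
  rw [← integral_add_adjacent_intervals (hf.mono_set (uIcc_subset_uIcc_left h0))
    (hf.mono_set (uIcc_subset_uIcc_right h0)), hleft, two_nsmul]

theorem sqrt_sub_two_sq_sub_one_mul_sq {s c : ℝ} (hs : 0 ≤ s) (hsc : s ^ 2 + c ^ 2 = 1) :
    √((c - 2) ^ 2 - 1) * s ^ 2 = s * (1 - c) * √(4 - (c - 1) ^ 2) := by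
  have hc : c ^ 2 ≤ 1 := by nlinarith
  have hc₁ : 0 ≤ 1 - c := by nlinarith
  have hc₂ : 0 ≤ 1 + c := by nlinarith
  have hs_eq : s = √(1 - c) * √(1 + c) := by
    rw [← sqrt_mul hc₁, show (1 - c) * (1 + c) = s ^ 2 by linarith, sqrt_sq hs]
  have e₁ : √((c - 2) ^ 2 - 1) = √(1 - c) * √(3 - c) := by
    rw [← sqrt_mul hc₁]; ring_nf
  have e₂ : √(4 - (c - 1) ^ 2) = √(1 + c) * √(3 - c) := by
    rw [← sqrt_mul hc₂]; ring_nf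
  rw [e₁, e₂, hs_eq]
  linear_combination √(1 - c) * √(1 + c) ^ 2 * √(3 - c) * sq_sqrt hc₁

theorem hasDerivAt_sub_sin_mul_cos_sub_sin_pow_three (φ : ℝ) :
    HasDerivAt (fun x => x - sin x * cos x - sin x ^ 3 / 3) ((2 - cos φ) * sin φ ^ 2) φ := by
  refine (((hasDerivAt_id φ).sub ((hasDerivAt_sin φ).mul (hasDerivAt_cos φ))).sub
    (((hasDerivAt_sin φ).pow 3).div_const 3)).congr_deriv ?_
  linear_combination -sin_sq_add_cos_sq φ

theorem hasDerivAt_four_sub_cos_sub_one_sq_rpow (φ : ℝ) :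
    HasDerivAt (fun x => (4 - (cos x - 1) ^ 2) ^ (3 / 2 : ℝ) / 3)
      (sin φ * (cos φ - 1) * √(4 - (cos φ - 1) ^ 2)) φ := by
  have hu : HasDerivAt (fun x => 4 - (cos x - 1) ^ 2) (2 * sin φ * (cos φ - 1)) φ := by
    refine ((((hasDerivAt_cos φ).sub_const 1).pow 2).const_sub 4).congr_deriv ?_
    ring
  refine ((hu.rpow_const (p := 3 / 2) (Or.inr (by norm_num))).div_const 3).congr_deriv ?_
  rw [show (3 / 2 : ℝ) - 1 = 1 / 2 by norm_num, ← sqrt_eq_rpow]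
  ring

noncomputable def constantCPrimitive (φ : ℝ) : ℝ :=
  φ - sin φ * cos φ - sin φ ^ 3 / 3 + (4 - (cos φ - 1) ^ 2) ^ (3 / 2 : ℝ) / 3

theorem hasDerivAt_constantCPrimitive {φ : ℝ} (hφ : 0 ≤ sin φ) :
    HasDerivAt constantCPrimitive
      ((-cos φ + 2 - √((cos φ - 2) ^ 2 - 1)) * sin φ ^ 2) φ := by
  refine ((hasDerivAt_sub_sin_mul_cos_sub_sin_pow_three φ).add
    (hasDerivAt_four_sub_cos_sub_one_sq_rpow φ)).congr_deriv ?_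
  linear_combination sqrt_sub_two_sq_sub_one_mul_sq hφ (sin_sq_add_cos_sq φ)

theorem constantCPrimitive_zero : constantCPrimitive 0 = 8 / 3 := by
  have h : (4 : ℝ) ^ (3 / 2 : ℝ) = 8 := by
    rw [show (4 : ℝ) = 2 ^ (2 : ℝ) by norm_num, ← rpow_mul (by norm_num)]
    norm_num
  norm_num [constantCPrimitive, h]

theorem constantCPrimitive_pi : constantCPrimitive π = π := by
  norm_num [constantCPrimitive]

theorem integral_zero_pi_eq_pi_sub_eight_thirds :
    ∫ φ in 0..π, (-cos φ + 2 - √((cos φ - 2) ^ 2 - 1)) * sin φ ^ 2 = π - 8 / 3 := by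
  rw [integral_eq_sub_of_hasDerivAt (f := constantCPrimitive), constantCPrimitive_pi,
    constantCPrimitive_zero]
  · intro φ hφ
    rw [uIcc_of_le pi_pos.le] at hφ
    exact hasDerivAt_constantCPrimitive (sin_nonneg_of_nonneg_of_le_pi hφ.1 hφ.2)
  · exact (by fun_prop : Continuous _).intervalIntegrable _ _

theorem constant_c_value :
    (1/Real.pi) * ∫ φ in (-Real.pi)..Real.pi,
      (-Real.cos φ + 2 - Real.sqrt ((Real.cos φ - 2)^2 - 1)) * (Real.sin φ)^2 =
      2 * (1 - 8/(3*Real.pi)) := by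
  rw [integral_neg_eq_two_nsmul_of_even (fun φ => by simp only [cos_neg, sin_neg, neg_sq])
    ((by fun_prop : Continuous _).intervalIntegrable _ _),
    integral_zero_pi_eq_pi_sub_eight_thirds, nsmul_eq_mul]
  field_simp
  ring
end

section
/- Let (f_{m,n}) ∈ ℓ²(ℤ≥0 × ℤ≥0) satisfy, with ν = E/λ and α = μ/λ: f_{m+1,n}+f_{m-1,n}+f_{m,n+1}+f_{m,n-1} = -ν f_{m,n} for m,n ≥ 1; f_{1,n}+f_{0,n+1}+f_{0,n-1} = -ν f_{0,n} for n ≥ 1; f_{m+1,0}+f_{m-1,0}+f_{m,1} = -ν f_{m,0} for m ≥ 1; and f_{1,0}+f_{0,1} = (α - ν) f_{0,0}. Define, for |x|,|y| < 1, F(x,y) = Σ_{p,q≥1} f_{p,q} x^{p-1} y^{q-1}, F(x) = Σ_{p≥1} f_{p,0} x^{p-1}, G(y) = Σ_{q≥1} f_{0,q} y^{q-1}. Then -Q(x,y)F(x,y) = q(x,y)F(x) + q(y,x)G(y) + q0(x,y) f_{0,0}, where Q(x,y) = y²x + x²y + νxy + x + y, q(x,y) = x² + xy + νx + 1, and q0(x,y)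 = x + y + ν - α. -/
/-!
Let `Φ(x, y) = ∑ f m n * x ^ m * y ^ n` be the generating function of the whole quadrant. Each
eigenvalue equation at `(m, n)` says that `f (m+1) n + f m (n+1) + ν * f m n` equals minus the
backward neighbours that lie inside the quadrant (plus `α * f 0 0` at the corner). Weighting by
`x ^ m * y ^ n` and summing, the backward neighbours contribute `x * Φ` and `y * Φ`, so
`∑ f (m+1) n x^m y^n + ∑ f m (n+1) x^m y^n + (x + y + ν) * Φ = α * f 0 0`. Splitting off the first
row and column, `Φ = f 0 0 + x F(x) + y G(y) + x y F(x, y)`, `∑ f (m+1) n x^m y^n = F(x) + y F(x, y)`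
and `∑ f m (n+1) x^m y^n = G(y) + x F(x, y)`; substituting gives the functional equation. All
series converge absolutely since a square-summable sequence is bounded.
-/

theorem norm_le_sqrt_tsum_sq {ι E : Type*} [SeminormedAddCommGroup E] {g : ι → E}
    (hg : Summable fun i => ‖g i‖ ^ 2) (i : ι) : ‖g i‖ ≤ √(∑' j, ‖g j‖ ^ 2) :=
  Real.le_sqrt_of_sq_le (hg.le_tsum i fun _ _ => sq_nonneg _)

noncomputable section

variable {𝕜 : Type*} [NormedField 𝕜]

def genFun (u : ℕ → 𝕜) (z : 𝕜) : 𝕜 := ∑' n, u n * z ^ n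

def genFun₂ (g : ℕ → ℕ → 𝕜) (x y : 𝕜) : 𝕜 := ∑' p : ℕ × ℕ, g p.1 p.2 * x ^ p.1 * y ^ p.2

variable {C D : ℝ} {x y z : 𝕜}

theorem genFun_neg (u : ℕ → 𝕜) : genFun (fun n => -u n) z = -genFun u z := by
  simp only [genFun, neg_mul, tsum_neg]

theorem genFun₂_neg (g : ℕ → ℕ → 𝕜) : genFun₂ (fun m n => -g m n) x y = -genFun₂ g x y := by
  simp only [genFun₂, neg_mul, tsum_neg]

theorem genFun₂_const_mul (c : 𝕜) (g : ℕ → ℕ → 𝕜) :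
    genFun₂ (fun m n => c * g m n) x y = c * genFun₂ g x y := by
  simp only [genFun₂, mul_assoc, tsum_mul_left]

theorem genFun₂_swap (g : ℕ → ℕ → 𝕜) : genFun₂ g x y = genFun₂ (fun m n => g n m) y x := by
  rw [genFun₂, ← (Equiv.prodComm ℕ ℕ).tsum_eq]
  exact tsum_congr fun p => by
    simp only [Equiv.prodComm_apply, Prod.fst_swap, Prod.snd_swap]
    ring

variable [CompleteSpace 𝕜]

theorem summable_genFun {u : ℕ → 𝕜} (hu : ∀ n, ‖u n‖ ≤ C) (hz : ‖z‖ < 1) :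
    Summable fun n => u n * z ^ n := by
  refine .of_norm_bounded ((summable_geometric_of_lt_one (norm_nonneg z) hz).mul_left C) fun n => ?_
  rw [norm_mul, norm_pow]
  exact mul_le_mul_of_nonneg_right (hu n) (by positivity)

theorem summable_genFun₂ {g : ℕ → ℕ → 𝕜} (hg : ∀ m n, ‖g m n‖ ≤ C) (hx : ‖x‖ < 1)
    (hy : ‖y‖ < 1) : Summable fun p : ℕ × ℕ => g p.1 p.2 * x ^ p.1 * y ^ p.2 := by
  have hgeom := (summable_geometric_of_lt_one (norm_nonneg x) hx).mul_of_nonneg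
    (summable_geometric_of_lt_one (norm_nonneg y) hy) (fun _ => by positivity) fun _ => by positivity
  refine .of_norm_bounded (hgeom.mul_left C) fun p => ?_
  rw [norm_mul, norm_mul, norm_pow, norm_pow, mul_assoc]
  exact mul_le_mul_of_nonneg_right (hg _ _) (by positivity)

theorem genFun₂_add {g h : ℕ → ℕ → 𝕜} (hg : ∀ m n, ‖g m n‖ ≤ C) (hh : ∀ m n, ‖h m n‖ ≤ D)
    (hx : ‖x‖ < 1) (hy : ‖y‖ < 1) :
    genFun₂ (fun m n => g m n + h m n) x y = genFun₂ g x y + genFun₂ h x y := by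
  simp only [genFun₂, add_mul]
  exact (summable_genFun₂ hg hx hy).tsum_add (summable_genFun₂ hh hx hy)

theorem genFun_eq_zero_add {u : ℕ → 𝕜} (hu : ∀ n, ‖u n‖ ≤ C) (hz : ‖z‖ < 1) :
    genFun u z = u 0 + z * genFun (fun n => u (n + 1)) z := by
  rw [genFun, (summable_genFun hu hz).tsum_eq_zero_add, genFun, ← tsum_mul_left]
  simp only [pow_zero, mul_one, pow_succ]
  congr 1
  exact tsum_congr fun n => by ring

theorem genFun₂_eq_genFun_add_fst {g : ℕ → ℕ → 𝕜} (hg : ∀ m n, ‖g m n‖ ≤ C) (hx : ‖x‖ < 1)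
    (hy : ‖y‖ < 1) :
    genFun₂ g x y = genFun (g 0) y + x * genFun₂ (fun m n => g (m + 1) n) x y := by
  have hs := summable_genFun₂ hg hx hy
  have hs' := summable_genFun₂ (fun m n => hg (m + 1) n) hx hy
  rw [genFun₂, hs.tsum_prod, hs.prod.tsum_eq_zero_add, genFun₂, hs'.tsum_prod, ← tsum_mul_left]
  congr 1
  · exact tsum_congr fun n => by simp
  · exact tsum_congr fun m => by
      rw [← tsum_mul_left]
      exact tsum_congr fun n => by ring

theorem genFun₂_eq_genFun_add_snd {g : ℕ → ℕ → 𝕜} (hg : ∀ m n, ‖g m n‖ ≤ C) (hx : ‖x‖ < 1)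
    (hy : ‖y‖ < 1) :
    genFun₂ g x y = genFun (fun m => g m 0) x + y * genFun₂ (fun m n => g m (n + 1)) x y := by
  rw [genFun₂_swap, genFun₂_eq_genFun_add_fst (fun m n => hg n m) hy hx, genFun₂_swap]

theorem genFun₂_eq_zero_zero_add {g : ℕ → ℕ → 𝕜} (hg : ∀ m n, ‖g m n‖ ≤ C) (hx : ‖x‖ < 1)
    (hy : ‖y‖ < 1) :
    genFun₂ g x y = g 0 0 + x * genFun (fun m => g (m + 1) 0) x
      + y * genFun (fun n => g 0 (n + 1)) y + x * y * genFun₂ (fun m n => g (m + 1) (n + 1)) x y := by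
  rw [genFun₂_eq_genFun_add_fst hg hx hy, genFun_eq_zero_add (hg 0) hy,
    genFun₂_eq_genFun_add_snd (fun m n => hg (m + 1) n) hx hy]
  ring

theorem genFun₂_eigen_eq {f : ℕ → ℕ → 𝕜} {ν α : 𝕜} (hf : ∀ m n, ‖f m n‖ ≤ C)
    (hx : ‖x‖ < 1) (hy : ‖y‖ < 1)
    (hint : ∀ m n : ℕ, f (m + 2) (n + 1) + f m (n + 1) + f (m + 1) (n + 2) + f (m + 1) n
      = -ν * f (m + 1) (n + 1))
    (hx0 : ∀ n : ℕ, f 1 (n + 1) + f 0 (n + 2) + f 0 n = -ν * f 0 (n + 1))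
    (hy0 : ∀ m : ℕ, f (m + 2) 0 + f m 0 + f (m + 1) 1 = -ν * f (m + 1) 0)
    (h00 : f 1 0 + f 0 1 = (α - ν) * f 0 0) :
    genFun₂ (fun m n => f (m + 1) n) x y + genFun₂ (fun m n => f m (n + 1)) x y
      + (x + y + ν) * genFun₂ f x y = α * f 0 0 := by
  have hshift (m n : ℕ) : ‖f (m + 1) n + f m (n + 1)‖ ≤ C + C :=
    (norm_add_le _ _).trans (add_le_add (hf _ _) (hf _ _))
  have hforward (m n : ℕ) : ‖f (m + 1) n + f m (n + 1) + ν * f m n‖ ≤ C + C + ‖ν‖ * C := by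
    grw [norm_add_le, norm_mul, hshift, hf]
  have hcorner : f 1 0 + f 0 1 + ν * f 0 0 = α * f 0 0 := by linear_combination h00
  have hrow : (fun m => f (m + 2) 0 + f (m + 1) 1 + ν * f (m + 1) 0) = fun m => -f m 0 :=
    funext fun m => by linear_combination hy0 m
  have hcol : (fun n => f 1 (n + 1) + f 0 (n + 2) + ν * f 0 (n + 1)) = fun n => -f 0 n :=
    funext fun n => by linear_combination hx0 n
  have hinterior : (fun m n => f (m + 2) (n + 1) + f (m + 1) (n + 2) + ν * f (m + 1) (n + 1))
      = fun m n => -(f m (n + 1) + f (m + 1) n) :=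
    funext fun m => funext fun n => by linear_combination hint m n
  have hdecomp := genFun₂_eq_zero_zero_add hforward hx hy
  simp only [hcorner, hrow, hcol, hinterior, genFun_neg, genFun₂_neg] at hdecomp
  rw [genFun₂_add hshift (fun m n => (norm_mul_le _ _).trans (by grw [hf])) hx hy,
    genFun₂_add (fun m n => hf (m + 1) n) (fun m n => hf m (n + 1)) hx hy, genFun₂_const_mul,
    genFun₂_add (fun m n => hf m (n + 1)) (fun m n => hf (m + 1) n) hx hy] at hdecomp
  linear_combination hdecomp + x * genFun₂_eq_genFun_add_snd hf hx hy
    + y * genFun₂_eq_genFun_add_fst hf hx hy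

end

theorem functional_equation_general (ν α : ℝ)
    (f : ℕ → ℕ → ℂ)
    (hsum : Summable (fun p : ℕ × ℕ => ‖f p.1 p.2‖^2))
    (hint : ∀ m n : ℕ, f (m+2) (n+1) + f m (n+1) + f (m+1) (n+2) + f (m+1) n
      = -(ν : ℂ) * f (m+1) (n+1))
    (hx0 : ∀ n : ℕ, f 1 (n+1) + f 0 (n+2) + f 0 n = -(ν : ℂ) * f 0 (n+1))
    (hy0 : ∀ m : ℕ, f (m+2) 0 + f m 0 + f (m+1) 1 = -(ν : ℂ) * f (m+1) 0)
    (h00 : f 1 0 + f 0 1 = ((α : ℂ) - (ν : ℂ)) * f 0 0) :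
    ∀ x y : ℂ, ‖x‖ < 1 → ‖y‖ < 1 →
      -(y^2*x + x^2*y + ν*x*y + x + y) *
        (∑' pq : ℕ × ℕ, f (pq.1+1) (pq.2+1) * x^pq.1 * y^pq.2) =
      (x^2 + x*y + ν*x + 1) * (∑' p : ℕ, f (p+1) 0 * x^p) +
      (y^2 + x*y + ν*y + 1) * (∑' q : ℕ, f 0 (q+1) * y^q) +
      (x + y + ν - α) * f 0 0 := by
  intro x y hx hy
  have hf (m n : ℕ) : ‖f m n‖ ≤ √(∑' p : ℕ × ℕ, ‖f p.1 p.2‖ ^ 2) :=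
    norm_le_sqrt_tsum_sq hsum (m, n)
  have heigen := genFun₂_eigen_eq hf hx hy hint hx0 hy0 h00
  have hfull := genFun₂_eq_zero_zero_add hf hx hy
  have hshift_fst := genFun₂_eq_genFun_add_snd (fun m n => hf (m + 1) n) hx hy
  have hshift_snd := genFun₂_eq_genFun_add_fst (fun m n => hf m (n + 1)) hx hy
  simp only [genFun, genFun₂] at heigen hfull hshift_fst hshift_snd
  linear_combination -heigen + hshift_fst + hshift_snd + (x + y + ν) * hfull

theorem functional_equation (l μ E : ℝ) (hl : 0 < l) (ν α : ℝ)
    (hν : ν = E / l) (hα : α = μ / l)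
    (f : ℕ → ℕ → ℂ)
    (hsum : Summable (fun p : ℕ × ℕ => ‖f p.1 p.2‖^2))
    (hint : ∀ m n : ℕ, f (m+2) (n+1) + f m (n+1) + f (m+1) (n+2) + f (m+1) n
      = -(ν : ℂ) * f (m+1) (n+1))
    (hx0 : ∀ n : ℕ, f 1 (n+1) + f 0 (n+2) + f 0 n = -(ν : ℂ) * f 0 (n+1))
    (hy0 : ∀ m : ℕ, f (m+2) 0 + f m 0 + f (m+1) 1 = -(ν : ℂ) * f (m+1) 0)
    (h00 : f 1 0 + f 0 1 = ((α : ℂ) - (ν : ℂ)) * f 0 0) :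
    ∀ x y : ℂ, ‖x‖ < 1 → ‖y‖ < 1 →
      -(y^2*x + x^2*y + ν*x*y + x + y) *
        (∑' pq : ℕ × ℕ, f (pq.1+1) (pq.2+1) * x^pq.1 * y^pq.2) =
      (x^2 + x*y + ν*x + 1) * (∑' p : ℕ, f (p+1) 0 * x^p) +
      (y^2 + x*y + ν*y + 1) * (∑' q : ℕ, f 0 (q+1) * y^q) +
      (x + y + ν - α) * f 0 0 :=
  functional_equation_general ν α f hsum hint hx0 hy0 h00
end

section
/- Let F₁(x) = Σ_{k≥1} a_k x^k be a power series with square-summable coefficients, α ∈ ℂ, and suppose the function F(x,y) = (F₁(x) − F₁(−y) + αy(x+y)) / ((x+y)(xy+1)) is analytic on {|x| < 1, |y| < 1} with square-summable Taylor coefficients A_{m,n}. Then A_{m,n} = (−1)^n (α δ_{m,n−1} + Σ_k a_k), where the sum is over k with |m−n|+1 ≤ k ≤ m+n+1 and m+n−k odd; in particular A_{n+l,n} = (−1)^n Σ_{r=0}^{n} a_{l+1+2r} for l ≥ 1. -/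
/-!
Clearing the denominator, `(x + y)(1 + xy) ∑ A_{mn} xᵐ yⁿ` is the numerator. Since
`(F₁(x) − F₁(−y))/(x + y)` has the bounded coefficients `(−1)ⁿ a_{m+n+1}`, the identity
theorem for bounded double power series on the bidisc (applied in `x`, then in `y`) shows that
multiplying by `1 + xy` sends `A` to these coefficients plus those of `αy`. This is a triangular
recursion, solved by `(−1)ⁿ Σ_{t ≤ min m n} a_{m+n+1−2t}` plus `(−1)ᵐ α` on the line `n = m + 1`.
Finally `A_{m,m+1} + A_{m+1,m} = (−1)ᵐ α` tends to zero by square-summability, so `α = 0`.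
-/

open Filter Topology Finset

theorem norm_le_sqrt_tsum_norm_sq {ι E : Type*} [SeminormedAddGroup E] {f : ι → E}
    (hf : Summable fun i => ‖f i‖ ^ 2) (i : ι) : ‖f i‖ ≤ √(∑' j, ‖f j‖ ^ 2) :=
  (abs_norm (f i)).symm.le.trans <|
    Real.abs_le_sqrt (hf.le_tsum i fun _ _ => sq_nonneg _)

section PowerSeries

variable {𝕜 : Type*} [NontriviallyNormedField 𝕜] [CompleteSpace 𝕜]

theorem eq_zero_of_tsum_mul_pow_eventually_eq_zero {c : ℕ → 𝕜} {M : ℝ} (hc : ∀ n, ‖c n‖ ≤ M)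
    (h : ∀ᶠ z in 𝓝[≠] 0, ∑' n, c n * z ^ n = 0) : c = 0 := by
  set p := FormalMultilinearSeries.ofScalars 𝕜 c
  have hr : 0 < p.radius := zero_lt_one.trans_le <| by
    simpa using p.le_radius_of_bound M (r := 1) fun n => by simpa [p] using hc n
  have hp : HasFPowerSeriesAt p.sum p 0 := (p.hasFPowerSeriesOnBall hr).hasFPowerSeriesAt
  have hsum : p.sum = fun z => ∑' n, c n * z ^ n := by
    ext z
    simp [p, FormalMultilinearSeries.sum, mul_comm]
  have hp0 : p = 0 := hp.eq_zero_of_eventually <|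
    hp.analyticAt.frequently_zero_iff_eventually_zero.mp (by rw [hsum]; exact h.frequently)
  funext n
  exact (FormalMultilinearSeries.ofScalars_eq_zero (E := 𝕜) n).mp (congrArg (· n) hp0)

end PowerSeries

namespace DoubleSeries

section Coefficients

variable {R : Type*}

def mulX [Zero R] (c : ℕ → ℕ → R) : ℕ → ℕ → R
  | 0, _ => 0
  | m + 1, n => c m n

def mulY [Zero R] (c : ℕ → ℕ → R) : ℕ → ℕ → R
  | _, 0 => 0
  | m, n + 1 => c m n

def onXAxis [Zero R] (b : ℕ → R) (m n : ℕ) : R := if n = 0 then b m else 0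

def onYAxis [Zero R] (b : ℕ → R) (m n : ℕ) : R := if m = 0 then b n else 0

def single [Zero R] (i j : ℕ) (v : R) (m n : ℕ) : R := if m = i ∧ n = j then v else 0

theorem add_mulX_mulY_injective [AddRightCancelMonoid R] :
    Function.Injective fun c : ℕ → ℕ → R => c + mulX (mulY c) := by
  intro c d h
  funext m
  induction m with
  | zero => funext n; simpa [mulX] using congrFun (congrFun h 0) n
  | succ m ih =>
    funext n
    cases n with
    | zero => simpa [mulX, mulY] using congrFun (congrFun h (m + 1)) 0
    | succ n =>
      have h' := congrFun (congrFun h (m + 1)) (n + 1)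
      simp only [Pi.add_apply, mulX, mulY, ih] at h'
      exact add_right_cancel h'

end Coefficients

section Bounded

variable {E : Type*} [SeminormedAddCommGroup E]

def BoundedCoeffs (c : ℕ → ℕ → E) : Prop := ∃ M, ∀ m n, ‖c m n‖ ≤ M

theorem BoundedCoeffs.add {c d : ℕ → ℕ → E} (hc : BoundedCoeffs c) (hd : BoundedCoeffs d) :
    BoundedCoeffs (c + d) := by
  obtain ⟨M, hM⟩ := hc
  obtain ⟨N, hN⟩ := hd
  exact ⟨M + N, fun m n => (norm_add_le _ _).trans (add_le_add (hM m n) (hN m n))⟩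

theorem BoundedCoeffs.sub {c d : ℕ → ℕ → E} (hc : BoundedCoeffs c) (hd : BoundedCoeffs d) :
    BoundedCoeffs (c - d) := by
  obtain ⟨M, hM⟩ := hc
  obtain ⟨N, hN⟩ := hd
  exact ⟨M + N, fun m n => (norm_sub_le _ _).trans (add_le_add (hM m n) (hN m n))⟩

theorem BoundedCoeffs.mulX {c : ℕ → ℕ → E} (hc : BoundedCoeffs c) : BoundedCoeffs (mulX c) := by
  obtain ⟨M, hM⟩ := hc
  refine ⟨M, fun m n => ?_⟩
  cases m with
  | zero => simpa [DoubleSeries.mulX] using (norm_nonneg _).trans (hM 0 0)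
  | succ m => exact hM m n

theorem BoundedCoeffs.mulY {c : ℕ → ℕ → E} (hc : BoundedCoeffs c) : BoundedCoeffs (mulY c) := by
  obtain ⟨M, hM⟩ := hc
  refine ⟨M, fun m n => ?_⟩
  cases n with
  | zero => simpa [DoubleSeries.mulY] using (norm_nonneg _).trans (hM 0 0)
  | succ n => exact hM m n

theorem boundedCoeffs_onXAxis {b : ℕ → E} {M : ℝ} (hb : ∀ n, ‖b n‖ ≤ M) :
    BoundedCoeffs (onXAxis b) :=
  ⟨M, fun m n => by unfold onXAxis; split_ifs <;> simp [hb, (norm_nonneg _).trans (hb 0)]⟩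

theorem boundedCoeffs_onYAxis {b : ℕ → E} {M : ℝ} (hb : ∀ n, ‖b n‖ ≤ M) :
    BoundedCoeffs (onYAxis b) :=
  ⟨M, fun m n => by unfold onYAxis; split_ifs <;> simp [hb, (norm_nonneg _).trans (hb 0)]⟩

theorem boundedCoeffs_single (i j : ℕ) (v : E) : BoundedCoeffs (single i j v) :=
  ⟨‖v‖, fun m n => by unfold single; split_ifs <;> simp⟩

end Bounded

section Eval

variable {𝕜 : Type*} [NontriviallyNormedField 𝕜]

noncomputable def eval (c : ℕ → ℕ → 𝕜) (x y : 𝕜) : 𝕜 :=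
  ∑' p : ℕ × ℕ, c p.1 p.2 * x ^ p.1 * y ^ p.2

theorem summable_of_boundedCoeffs [CompleteSpace 𝕜] {c : ℕ → ℕ → 𝕜} (hc : BoundedCoeffs c)
    {x y : 𝕜} (hx : ‖x‖ < 1) (hy : ‖y‖ < 1) :
    Summable fun p : ℕ × ℕ => c p.1 p.2 * x ^ p.1 * y ^ p.2 := by
  obtain ⟨M, hM⟩ := hc
  have hgeom : Summable fun p : ℕ × ℕ => ‖x‖ ^ p.1 * ‖y‖ ^ p.2 :=
    (summable_geometric_of_lt_one (norm_nonneg x) hx).mul_of_nonneg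
      (summable_geometric_of_lt_one (norm_nonneg y) hy) (fun _ => by positivity)
      (fun _ => by positivity)
  refine Summable.of_norm_bounded (hgeom.mul_left M) fun p => ?_
  rw [norm_mul, norm_mul, norm_pow, norm_pow, mul_assoc]
  exact mul_le_mul_of_nonneg_right (hM p.1 p.2) (by positivity)

theorem eval_add [CompleteSpace 𝕜] {c d : ℕ → ℕ → 𝕜} (hc : BoundedCoeffs c)
    (hd : BoundedCoeffs d) {x y : 𝕜} (hx : ‖x‖ < 1) (hy : ‖y‖ < 1) :
    eval (c + d) x y = eval c x y + eval d x y := by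
  simp only [eval, Pi.add_apply, add_mul]
  exact (summable_of_boundedCoeffs hc hx hy).tsum_add (summable_of_boundedCoeffs hd hx hy)

theorem eval_sub [CompleteSpace 𝕜] {c d : ℕ → ℕ → 𝕜} (hc : BoundedCoeffs c)
    (hd : BoundedCoeffs d) {x y : 𝕜} (hx : ‖x‖ < 1) (hy : ‖y‖ < 1) :
    eval (c - d) x y = eval c x y - eval d x y := by
  simp only [eval, Pi.sub_apply, sub_mul]
  exact (summable_of_boundedCoeffs hc hx hy).tsum_sub (summable_of_boundedCoeffs hd hx hy)

theorem eval_eq_tsum_comp {ι : Type*} {g : ι → ℕ × ℕ} (hg : g.Injective) {c : ℕ → ℕ → 𝕜}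
    (hc : ∀ m n, c m n ≠ 0 → (m, n) ∈ Set.range g) (x y : 𝕜) :
    eval c x y = ∑' i, c (g i).1 (g i).2 * x ^ (g i).1 * y ^ (g i).2 :=
  (hg.tsum_eq fun p hp => hc p.1 p.2 fun h => hp (by simp [h])).symm

theorem eval_mulX (c : ℕ → ℕ → 𝕜) (x y : 𝕜) : eval (mulX c) x y = x * eval c x y := by
  rw [eval_eq_tsum_comp (g := fun p : ℕ × ℕ => (p.1 + 1, p.2)), eval, ← tsum_mul_left]
  · refine tsum_congr fun p => ?_
    simp only [mulX]
    ring
  · intro p q h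
    simpa [Prod.ext_iff] using h
  · rintro (_ | m) n h
    · exact absurd rfl h
    · exact ⟨(m, n), rfl⟩

theorem eval_mulY (c : ℕ → ℕ → 𝕜) (x y : 𝕜) : eval (mulY c) x y = y * eval c x y := by
  rw [eval_eq_tsum_comp (g := fun p : ℕ × ℕ => (p.1, p.2 + 1)), eval, ← tsum_mul_left]
  · refine tsum_congr fun p => ?_
    simp only [mulY]
    ring
  · intro p q h
    simpa [Prod.ext_iff] using h
  · rintro m (_ | n) h
    · exact absurd rfl h
    · exact ⟨(m, n), rfl⟩

theorem eval_onXAxis (b : ℕ → 𝕜) (x y : 𝕜) : eval (onXAxis b) x y = ∑' m, b m * x ^ m := by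
  rw [eval_eq_tsum_comp (g := fun m : ℕ => (m, 0))]
  · simp [onXAxis]
  · intro p q h
    simpa using h
  · intro m n h
    exact ⟨m, by simp_all [onXAxis]⟩

theorem eval_onYAxis (b : ℕ → 𝕜) (x y : 𝕜) : eval (onYAxis b) x y = ∑' n, b n * y ^ n := by
  rw [eval_eq_tsum_comp (g := fun n : ℕ => (0, n))]
  · simp [onYAxis]
  · intro p q h
    simpa using h
  · intro m n h
    exact ⟨n, by simp_all [onYAxis]⟩

theorem eval_single (i j : ℕ) (v x y : 𝕜) : eval (single i j v) x y = v * x ^ i * y ^ j := by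
  rw [eval_eq_tsum_comp (g := fun _ : Unit => (i, j))]
  · simp [single]
  · intro p q _
    rfl
  · intro m n h
    exact ⟨(), by simp_all [single]⟩

theorem eq_zero_of_eval_eq_zero [CompleteSpace 𝕜] {c : ℕ → ℕ → 𝕜} (hc : BoundedCoeffs c)
    (h : ∀ x y : 𝕜, ‖x‖ < 1 → ‖y‖ < 1 → x + y ≠ 0 → eval c x y = 0) : c = 0 := by
  obtain ⟨M, hM⟩ := hc
  have hrow : ∀ y : 𝕜, y ≠ 0 → ‖y‖ < 1 → ∀ m, ∑' n, c m n * y ^ n = 0 := by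
    intro y hy0 hy
    refine congrFun (eq_zero_of_tsum_mul_pow_eventually_eq_zero (M := M * (1 - ‖y‖)⁻¹)
      (fun m => ?_) ?_)
    · refine tsum_of_norm_bounded ((hasSum_geometric_of_lt_one (norm_nonneg y) hy).mul_left M)
        fun n => ?_
      rw [norm_mul, norm_pow]
      exact mul_le_mul_of_nonneg_right (hM m n) (by positivity)
    · filter_upwards [nhdsWithin_le_nhds (Metric.ball_mem_nhds (0 : 𝕜) (norm_pos_iff.mpr hy0))]
        with x hx
      rw [mem_ball_zero_iff] at hx
      have hxy : x + y ≠ 0 := fun h0 => by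
        rw [add_eq_zero_iff_eq_neg.mp h0, norm_neg] at hx
        exact lt_irrefl _ hx
      have hx1 : ‖x‖ < 1 := hx.trans hy
      rw [← h x y hx1 hy hxy, eval, (summable_of_boundedCoeffs ⟨M, hM⟩ hx1 hy).tsum_prod]
      refine tsum_congr fun m => ?_
      rw [← tsum_mul_right]
      exact tsum_congr fun n => by ring
  funext m
  refine eq_zero_of_tsum_mul_pow_eventually_eq_zero (hM m) ?_
  filter_upwards [self_mem_nhdsWithin, nhdsWithin_le_nhds (Metric.ball_mem_nhds (0 : 𝕜) one_pos)]
    with y hy0 hy1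
  exact hrow y hy0 (mem_ball_zero_iff.mp hy1) m

theorem eq_of_eval_eq [CompleteSpace 𝕜] {c d : ℕ → ℕ → 𝕜} (hc : BoundedCoeffs c)
    (hd : BoundedCoeffs d)
    (h : ∀ x y : 𝕜, ‖x‖ < 1 → ‖y‖ < 1 → x + y ≠ 0 → eval c x y = eval d x y) : c = d :=
  sub_eq_zero.mp <| eq_zero_of_eval_eq_zero (hc.sub hd) fun x y hx hy hxy => by
    rw [eval_sub hc hd hx hy, h x y hx hy hxy, sub_self]

end Eval

end DoubleSeries

open DoubleSeries

section TaylorCoeff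

variable {R : Type*}

def windowSum [AddCommMonoid R] (a : ℕ → R) (m n : ℕ) : R :=
  ∑ t ∈ range (min m n + 1), a (m + n + 1 - 2 * t)

section AddCommMonoid

variable [AddCommMonoid R] (a : ℕ → R)

@[simp] theorem windowSum_zero_left (n : ℕ) : windowSum a 0 n = a (n + 1) := by
  simp [windowSum]

@[simp] theorem windowSum_zero_right (m : ℕ) : windowSum a m 0 = a (m + 1) := by
  simp [windowSum]

theorem windowSum_succ_succ (m n : ℕ) :
    windowSum a (m + 1) (n + 1) = a (m + n + 3) + windowSum a m n := by
  rw [windowSum, Nat.add_min_add_right, sum_range_succ', add_comm, windowSum]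
  exact congrArg₂ (· + ·) (congrArg a (by omega))
    (sum_congr rfl fun t _ => congrArg a (by omega))

theorem windowSum_comm (m n : ℕ) : windowSum a m n = windowSum a n m := by
  rw [windowSum, windowSum, min_comm, add_comm m n]

theorem windowSum_eq_sum_filter (m n : ℕ) :
    windowSum a m n = ∑ k ∈ (Icc (max m n - min m n + 1) (m + n + 1)).filter
      (fun k => Odd (m + n + k)), a k := by
  refine sum_nbij' (fun t => m + n + 1 - 2 * t) (fun k => (m + n + 1 - k) / 2) ?_ ?_ ?_ ?_ ?_
  all_goals intro t ht
  all_goals simp only [mem_range, mem_filter, mem_Icc, Nat.odd_iff] at ht ⊢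
  all_goals omega

theorem windowSum_add_left (l n : ℕ) :
    windowSum a (n + l) n = ∑ r ∈ range (n + 1), a (l + 1 + 2 * r) := by
  rw [windowSum, min_eq_right (Nat.le_add_right n l), ← sum_range_reflect]
  refine sum_congr rfl fun r hr => ?_
  rw [mem_range] at hr
  congr 1
  omega

end AddCommMonoid

variable [CommRing R]

def diffQuotCoeff (a : ℕ → R) (m n : ℕ) : R := (-1) ^ n * a (m + n + 1)

def taylorCoeff (a : ℕ → R) (α : R) (m n : ℕ) : R :=
  (-1) ^ n * windowSum a m n + if n = m + 1 then (-1) ^ m * α else 0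

theorem mulX_add_mulY_diffQuotCoeff (a : ℕ → R) :
    mulX (diffQuotCoeff a) + mulY (diffQuotCoeff a) =
      onXAxis a + onYAxis fun n => (-1) ^ (n + 1) * a n := by
  funext m n
  rcases m with _ | m <;> rcases n with _ | n
  · simp [mulX, mulY, onXAxis, onYAxis]
  · simp [mulX, mulY, onXAxis, onYAxis, diffQuotCoeff, pow_succ]
  · simp [mulX, mulY, onXAxis, onYAxis, diffQuotCoeff]
  · simp [mulX, mulY, onXAxis, onYAxis, diffQuotCoeff, show m + (n + 1) = m + 1 + n by omega,
      pow_succ]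

theorem taylorCoeff_add_mulX_mulY (a : ℕ → R) (α : R) :
    taylorCoeff a α + mulX (mulY (taylorCoeff a α)) = diffQuotCoeff a + single 0 1 α := by
  funext m n
  rcases m with _ | m
  · simp [mulX, single, taylorCoeff, diffQuotCoeff]
  rcases n with _ | n
  · simp [mulX, mulY, single, taylorCoeff, diffQuotCoeff]
  · simp only [Pi.add_apply, mulX, mulY, single, taylorCoeff, diffQuotCoeff, windowSum_succ_succ,
      show m + 1 + (n + 1) + 1 = m + n + 3 by omega, Nat.add_right_cancel_iff,
      Nat.add_one_ne_zero, false_and, if_false, add_zero]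
    split_ifs <;> ring

theorem taylorCoeff_add_taylorCoeff_swap (a : ℕ → R) (α : R) (m : ℕ) :
    taylorCoeff a α m (m + 1) + taylorCoeff a α (m + 1) m = (-1) ^ m * α := by
  rw [taylorCoeff, taylorCoeff, if_pos rfl, if_neg (by omega), windowSum_comm a m]
  ring

end TaylorCoeff

section Analytic

variable {𝕜 : Type*} [NontriviallyNormedField 𝕜]

theorem mul_add_one_ne_zero {x y : 𝕜} (hx : ‖x‖ < 1) (hy : ‖y‖ < 1) : x * y + 1 ≠ 0 := by
  intro h
  have hlt : ‖x * y‖ < 1 := by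
    rw [norm_mul]
    exact mul_lt_one_of_nonneg_of_lt_one_left (norm_nonneg x) hx hy.le
  rw [eq_neg_of_add_eq_zero_left h, norm_neg, norm_one] at hlt
  exact lt_irrefl _ hlt

theorem boundedCoeffs_diffQuotCoeff {a : ℕ → 𝕜} {M : ℝ} (ha : ∀ k, ‖a k‖ ≤ M) :
    BoundedCoeffs (diffQuotCoeff a) :=
  ⟨M, fun m n => by simpa [diffQuotCoeff] using ha (m + n + 1)⟩

theorem mul_eval_diffQuotCoeff [CompleteSpace 𝕜] {a : ℕ → 𝕜} {M : ℝ} (ha : ∀ k, ‖a k‖ ≤ M)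
    {x y : 𝕜} (hx : ‖x‖ < 1) (hy : ‖y‖ < 1) :
    (x + y) * eval (diffQuotCoeff a) x y = ∑' k, a k * x ^ k - ∑' k, a k * (-y) ^ k := by
  have hG := boundedCoeffs_diffQuotCoeff ha
  have hb : ∀ n, ‖(-1 : 𝕜) ^ (n + 1) * a n‖ ≤ M := fun n => by simpa using ha n
  calc (x + y) * eval (diffQuotCoeff a) x y
      = eval (mulX (diffQuotCoeff a) + mulY (diffQuotCoeff a)) x y := by
        rw [eval_add hG.mulX hG.mulY hx hy, eval_mulX, eval_mulY, add_mul]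
    _ = eval (onXAxis a + onYAxis fun n => (-1) ^ (n + 1) * a n) x y := by
        rw [mulX_add_mulY_diffQuotCoeff]
    _ = _ := by
        rw [eval_add (boundedCoeffs_onXAxis ha) (boundedCoeffs_onYAxis hb) hx hy, eval_onXAxis,
          eval_onYAxis, sub_eq_add_neg, ← tsum_neg]
        congr 1
        refine tsum_congr fun n => ?_
        rw [neg_pow]
        ring

theorem eq_zero_of_summable_norm_taylorCoeff_sq {a : ℕ → 𝕜} {α : 𝕜}
    (h : Summable fun p : ℕ × ℕ => ‖taylorCoeff a α p.1 p.2‖ ^ 2) : α = 0 := by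
  have hC : Tendsto (fun p : ℕ × ℕ => ‖taylorCoeff a α p.1 p.2‖) cofinite (𝓝 0) := by
    simpa using h.tendsto_cofinite_zero.sqrt
  have hline : ∀ g : ℕ → ℕ × ℕ, g.Injective →
      Tendsto (fun m => ‖taylorCoeff a α (g m).1 (g m).2‖) atTop (𝓝 0) :=
    fun g hg => Nat.cofinite_eq_atTop ▸ hC.comp hg.tendsto_cofinite
  have hsum := (hline (fun m => (m, m + 1)) fun m k h => by simpa using h).add
    (hline (fun m => (m + 1, m)) fun m k h => by simpa using h)
  rw [add_zero] at hsum
  refine norm_le_zero_iff.mp (ge_of_tendsto' hsum fun m => ?_)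
  calc ‖α‖ = ‖taylorCoeff a α m (m + 1) + taylorCoeff a α (m + 1) m‖ := by
        simp [taylorCoeff_add_taylorCoeff_swap]
    _ ≤ _ := norm_add_le _ _

end Analytic

theorem taylor_coefficients_general (a : ℕ → ℂ)
    (hasq : Summable (fun k : ℕ => ‖a k‖^2)) (α : ℂ)
    (A : ℕ → ℕ → ℂ)
    (hAsq : Summable (fun p : ℕ × ℕ => ‖A p.1 p.2‖^2))
    (hF : ∀ x y : ℂ, ‖x‖ < 1 → ‖y‖ < 1 → (x + y) * (x*y + 1) ≠ 0 →
      ∑' pq : ℕ × ℕ, A pq.1 pq.2 * x^pq.1 * y^pq.2 =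
        ((∑' k : ℕ, a k * x^k) - (∑' k : ℕ, a k * (-y)^k) + α * y * (x + y)) /
          ((x + y) * (x*y + 1))) :
    (∀ m n : ℕ, A m n = (-1:ℂ)^n * ((if n = m + 1 then α else 0) +
      ∑ k ∈ (Finset.Icc (max m n - min m n + 1) (m+n+1)).filter
        (fun k => Odd (m+n+k)), a k)) ∧
    (∀ l n : ℕ, 1 ≤ l →
      A (n+l) n = (-1:ℂ)^n * ∑ r ∈ Finset.range (n+1), a (l+1+2*r)) := by
  have ha := norm_le_sqrt_tsum_norm_sq hasq
  have hA : BoundedCoeffs A := ⟨_, fun m n => norm_le_sqrt_tsum_norm_sq hAsq (m, n)⟩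
  have hG := boundedCoeffs_diffQuotCoeff ha
  have hS := boundedCoeffs_single 0 1 α
  have hQ : A + mulX (mulY A) = diffQuotCoeff a + single 0 1 α := by
    refine eq_of_eval_eq (hA.add hA.mulY.mulX) (hG.add hS) fun x y hx hy hxy =>
      mul_left_cancel₀ hxy ?_
    rw [eval_add hA hA.mulY.mulX hx hy, eval_add hG hS hx hy, eval_mulX, eval_mulY, eval_single,
      mul_add (x + y) (eval (diffQuotCoeff a) x y), mul_eval_diffQuotCoeff ha hx hy, eval,
      hF x y hx hy (mul_ne_zero hxy (mul_add_one_ne_zero hx hy))]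
    field_simp [mul_add_one_ne_zero hx hy]
    ring
  have hAC : A = taylorCoeff a α :=
    add_mulX_mulY_injective (hQ.trans (taylorCoeff_add_mulX_mulY a α).symm)
  obtain rfl : α = 0 := eq_zero_of_summable_norm_taylorCoeff_sq (hAC ▸ hAsq)
  subst hAC
  refine ⟨fun m n => ?_, fun l n _ => ?_⟩
  · simp [taylorCoeff, windowSum_eq_sum_filter]
  · simp [taylorCoeff, windowSum_add_left]

theorem taylor_coefficients (a : ℕ → ℂ) (ha0 : a 0 = 0)
    (hasq : Summable (fun k : ℕ => ‖a k‖^2)) (α : ℂ)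
    (A : ℕ → ℕ → ℂ)
    (hAsq : Summable (fun p : ℕ × ℕ => ‖A p.1 p.2‖^2))
    (hF : ∀ x y : ℂ, ‖x‖ < 1 → ‖y‖ < 1 → (x + y) * (x*y + 1) ≠ 0 →
      ∑' pq : ℕ × ℕ, A pq.1 pq.2 * x^pq.1 * y^pq.2 =
        ((∑' k : ℕ, a k * x^k) - (∑' k : ℕ, a k * (-y)^k) + α * y * (x + y)) /
          ((x + y) * (x*y + 1))) :
    (∀ m n : ℕ, A m n = (-1:ℂ)^n * ((if n = m + 1 then α else 0) +
      ∑ k ∈ (Finset.Icc (max m n - min m n + 1) (m+n+1)).filter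
        (fun k => Odd (m+n+k)), a k)) ∧
    (∀ l n : ℕ, 1 ≤ l →
      A (n+l) n = (-1:ℂ)^n * ∑ r ∈ Finset.range (n+1), a (l+1+2*r)) :=
  taylor_coefficients_general a hasq α A hAsq hF
end
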